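/- Let α > 0, 0 < β < α/3, M > 0 be reals and let ℓ ≥ 2 and d with 0 ≤ d ≤ ℓ−2 be integers. With s_l, s_r as defined (so that 0 < 1/s_l < 1/s_r), one has Y(ℓ,d,M) ⊆ W(1/s_l, 1/s_r, Mα(ℓ+3)) − (Mα, 0); that is, every (x,t) ∈ Y(ℓ,d,M) satisfies (x + Mα, t) ∈ W(1/s_l, 1/s_r, Mα(ℓ+3)). -/

import Mathlib

open Set

/-- The wedge `W(a_l, a_r, M) = {(x,t) : t ≥ 0, a_l t ≤ x ≤ M + a_r t}` as a subset of `ℝ²`. -/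
def wedge (al ar M : ℝ) : Set (ℝ × ℝ) :=
  {p | 0 ≤ p.2 ∧ al * p.2 ≤ p.1 ∧ p.1 ≤ M + ar * p.2}

/-- Translate a subset of `ℝ²` by a vector. -/
def shiftSet (v : ℝ × ℝ) (S : Set (ℝ × ℝ)) : Set (ℝ × ℝ) :=
  (fun p => v + p) '' S

/-- The large left parallelogram `L00`. -/
def bigL (α β M : ℝ) : Set (ℝ × ℝ) :=
  {p | 0 ≤ p.2 ∧ p.2 ≤ M * (1 + β / α) ∧
    M * β / 2 ≤ p.1 + α * p.2 ∧ p.1 + α * p.2 ≤ 3 * M * β / 2}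

/-- The large right parallelogram `R00`. -/
def bigR (α β M : ℝ) : Set (ℝ × ℝ) :=
  {p | 0 ≤ p.2 ∧ p.2 ≤ M * (1 + β / α) ∧
    -(3 * M * β / 2) ≤ p.1 - α * p.2 ∧ p.1 - α * p.2 ≤ -(M * β / 2)}

/-- The small left parallelogram `L00small`. -/
def smallL (α β M : ℝ) : Set (ℝ × ℝ) :=
  {p | 0 ≤ p.2 ∧ p.2 ≤ 3 * M * β / (2 * α) ∧
    M * β / 2 ≤ p.1 + α * p.2 ∧ p.1 + α * p.2 ≤ 3 * M * β / 2}

/-- The small right parallelogram `R00small`. -/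
def smallR (α β M : ℝ) : Set (ℝ × ℝ) :=
  {p | 0 ≤ p.2 ∧ p.2 ≤ 3 * M * β / (2 * α) ∧
    -(3 * M * β / 2) ≤ p.1 - α * p.2 ∧ p.1 - α * p.2 ≤ -(M * β / 2)}

/-- The translation vector `v_jk = (M j (α−β), M k)`. -/
def vjk (α β M : ℝ) (j k : ℤ) : ℝ × ℝ := (M * (j : ℝ) * (α - β), M * (k : ℝ))

def Ljk (α β M : ℝ) (j k : ℤ) : Set (ℝ × ℝ) := shiftSet (vjk α β M j k) (bigL α β M)
def Rjk (α β M : ℝ) (j k : ℤ) : Set (ℝ × ℝ) := shiftSet (vjk α β M j k) (bigR α β M)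
def Lsjk (α β M : ℝ) (j k : ℤ) : Set (ℝ × ℝ) := shiftSet (vjk α β M j k) (smallL α β M)
def Rsjk (α β M : ℝ) (j k : ℤ) : Set (ℝ × ℝ) := shiftSet (vjk α β M j k) (smallR α β M)

/-- The region `Y00` built from `ℓ` big right parallelograms with small left connectors and
two branches of big left parallelograms with small right connectors. -/
def Y00 (α β M : ℝ) (ℓ d : ℤ) : Set (ℝ × ℝ) :=
  bigR α β M ∪
  (⋃ i ∈ Finset.Icc (1 : ℤ) ℓ, (Rjk α β M i i ∪ Lsjk α β M i i)) ∪
  Ljk α β M ℓ ℓ ∪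
  (if 1 ≤ d then Ljk α β M (ℓ + 1) (ℓ + 1) else ∅) ∪
  (if d = 1 then Ljk α β M (ℓ - 1) (ℓ + 1) ∪ Rsjk α β M (ℓ - 1) (ℓ + 1) else ∅) ∪
  (if 2 ≤ d then
    (⋃ i ∈ Finset.Ico (0 : ℤ) d,
      (Ljk α β M (ℓ - i) (ℓ + i) ∪ Rsjk α β M (ℓ - i) (ℓ + i) ∪
        Ljk α β M (ℓ + 1 - i) (ℓ + 1 + i) ∪ Rsjk α β M (ℓ + 1 - i) (ℓ + 1 + i))) ∪
    Ljk α β M (ℓ - d) (ℓ + d) ∪ Rsjk α β M (ℓ - d) (ℓ + d)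
  else ∅)

/-- The shiftSet `Y_jk` of `Y00`. -/
def Yjk (α β M : ℝ) (ℓ d j k : ℤ) : Set (ℝ × ℝ) :=
  shiftSet (M * ((k * (ℓ - d) + j : ℤ) : ℝ) * (α - β), M * (k : ℝ) * ((ℓ + d + 1 : ℤ) : ℝ))
    (Y00 α β M ℓ d)

/-- The full region `Y(ℓ,d,M) = ⋃_{(j,k) ∈ 𝕃, −k ≤ j ≤ k} Y_jk`. -/
def Yreg (α β M : ℝ) (ℓ d : ℤ) : Set (ℝ × ℝ) :=
  ⋃ (j : ℤ) (k : ℤ) (_ : 0 ≤ k ∧ Even (j + k) ∧ -k ≤ j ∧ j ≤ k), Yjk α β M ℓ d j k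

/-!
The offsets of the copies `Y_jk` are nonnegative combinations of `M((ℓ-d+1)(α-β), ℓ+d+1)` and
`M((ℓ-d-1)(α-β), ℓ+d+1)`, whose slopes are exactly `1/s_r` and `1/s_l`; so they lie in the cone
`W(1/s_l, 1/s_r, 0)`, and adding a cone vector keeps a point in the wedge. It remains to place
`Y00` in the wedge. Each piece of `Y00` is a translate `v_jk + P` of one of the four
parallelograms, all of which lie in `t ≥ 0, x ≤ M(α + β/2)`, so only the left edge
`t/s_l ≤ x + Mα` depends on the piece. For the right parallelograms and the small left ones it
follows from `k/s_l ≤ j(α-β)`; a big left parallelogram reaches about `Mα` further left at its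
top and needs the stronger `(k+1)/s_l ≤ (j-1)(α-β)`, which holds on both branches because
`(ℓ+d+1)/s_l = (ℓ-d-1)(α-β)`.
-/

theorem add_mem_wedge {al ar M N : ℝ} {p q : ℝ × ℝ} (hp : p ∈ wedge al ar M)
    (hq : q ∈ wedge al ar N) : p + q ∈ wedge al ar (M + N) := by
  obtain ⟨hp0, hpl, hpr⟩ := hp
  obtain ⟨hq0, hql, hqr⟩ := hq
  simp only [wedge, mem_ofPred_eq, Prod.fst_add, Prod.snd_add, mul_add]
  exact ⟨add_nonneg hp0 hq0, by linarith, by linarith⟩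

theorem wedge_subset_wedge {al al' ar ar' M M' : ℝ} (hl : al' ≤ al) (hr : ar ≤ ar')
    (hM : M ≤ M') : wedge al ar M ⊆ wedge al' ar' M' := by
  rintro p ⟨h0, hl', hr'⟩
  exact ⟨h0, by nlinarith, by nlinarith⟩

def shiftedWedge (a al ar N : ℝ) : Set (ℝ × ℝ) := {q | (q.1 + a, q.2) ∈ wedge al ar N}

theorem shiftSet_shiftedWedge_subset {a al ar N : ℝ} {v : ℝ × ℝ} (hv : v ∈ wedge al ar 0) :
    shiftSet v (shiftedWedge a al ar N) ⊆ shiftedWedge a al ar N := by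
  rintro _ ⟨q, hq, rfl⟩
  have h := add_mem_wedge hv hq
  rw [zero_add] at h
  show ((v + q).1 + a, (v + q).2) ∈ wedge al ar N
  convert h using 1
  ext <;> simp only [Prod.fst_add, Prod.snd_add, add_assoc]

section Pieces

variable {α β M cl : ℝ} {ℓ j k : ℤ}

theorem le_mul_one_add_div_iff {t : ℝ} (hα : 0 < α) :
    t ≤ M * (1 + β / α) ↔ α * t ≤ M * (α + β) := by
  rw [show M * (1 + β / α) = M * (α + β) / α by field_simp, le_div_iff₀ hα, mul_comm]

theorem smallR_subset_bigR (hβ : 0 < β) (h3β : 3 * β < α) (hM : 0 < M) :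
    smallR α β M ⊆ bigR α β M := by
  rintro r ⟨h0, hT, h1, h2⟩
  refine ⟨h0, (le_mul_one_add_div_iff (by linarith)).2 ?_, h1, h2⟩
  rw [le_div_iff₀ (by linarith)] at hT
  nlinarith [mul_le_mul_of_nonneg_left h3β.le hM.le]

theorem Rsjk_subset_Rjk (hβ : 0 < β) (h3β : 3 * β < α) (hM : 0 < M) :
    Rsjk α β M j k ⊆ Rjk α β M j k :=
  image_mono (smallR_subset_bigR hβ h3β hM)

theorem vjk_add_mem_shiftedWedge {r : ℝ × ℝ} (hβ : 0 < β) (hβα : β < α) (hM : 0 < M)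
    (hℓ : 0 ≤ ℓ) (hk : 0 ≤ k) (hj : j ≤ ℓ + 1) (hr2 : 0 ≤ r.2) (hr1 : r.1 ≤ M * (α + β / 2))
    (hleft : cl * (M * k + r.2) ≤ M * j * (α - β) + r.1 + M * α) :
    vjk α β M j k + r ∈ shiftedWedge (M * α) cl 0 (M * α * (ℓ + 3)) := by
  have hℓ' : (0 : ℝ) ≤ ℓ := by exact_mod_cast hℓ
  have hj' : (j : ℝ) ≤ ℓ + 1 := by exact_mod_cast hj
  have hcol : M * j * (α - β) ≤ M * (ℓ + 1) * (α - β) := by gcongr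
  simp only [shiftedWedge, wedge, vjk, mem_ofPred_eq, Prod.fst_add, Prod.snd_add]
  refine ⟨add_nonneg (mul_nonneg hM.le (by exact_mod_cast hk)) hr2, by linarith, ?_⟩
  nlinarith [mul_nonneg hM.le (mul_nonneg hℓ' hβ.le)]

theorem Rjk_subset_shiftedWedge (hβ : 0 < β) (h3β : 3 * β < α) (hM : 0 < M) (hclα : cl ≤ α)
    (hℓ : 0 ≤ ℓ) (hk : 0 ≤ k) (hj : j ≤ ℓ + 1) (hjk : cl * k ≤ j * (α - β)) :
    Rjk α β M j k ⊆ shiftedWedge (M * α) cl 0 (M * α * (ℓ + 3)) := by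
  rintro _ ⟨r, ⟨h0, hT, h1, h2⟩, rfl⟩
  rw [le_mul_one_add_div_iff (by linarith)] at hT
  refine vjk_add_mem_shiftedWedge hβ (by linarith) hM hℓ hk hj h0 (by linarith) ?_
  have hcol := mul_le_mul_of_nonneg_left hjk hM.le
  have hslope := mul_le_mul_of_nonneg_right hclα h0
  nlinarith

theorem Lsjk_subset_shiftedWedge (hβ : 0 < β) (h3β : 3 * β < α) (hM : 0 < M) (hclα : cl ≤ α)
    (hℓ : 0 ≤ ℓ) (hk : 0 ≤ k) (hj : j ≤ ℓ + 1) (hjk : cl * k ≤ j * (α - β)) :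
    Lsjk α β M j k ⊆ shiftedWedge (M * α) cl 0 (M * α * (ℓ + 3)) := by
  rintro _ ⟨r, ⟨h0, hT, h1, h2⟩, rfl⟩
  rw [le_div_iff₀ (by linarith)] at hT
  refine vjk_add_mem_shiftedWedge hβ (by linarith) hM hℓ hk hj h0 (by nlinarith) ?_
  have hcol := mul_le_mul_of_nonneg_left hjk hM.le
  have hslope := mul_le_mul_of_nonneg_right hclα h0
  nlinarith

theorem Ljk_subset_shiftedWedge (hβ : 0 < β) (h3β : 3 * β < α) (hM : 0 < M) (hcl : 0 ≤ cl)
    (hclα : cl ≤ α - β) (hℓ : 0 ≤ ℓ) (hk : 0 ≤ k) (hj : j ≤ ℓ + 1)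
    (hjk : cl * (k + 1) ≤ (j - 1) * (α - β)) :
    Ljk α β M j k ⊆ shiftedWedge (M * α) cl 0 (M * α * (ℓ + 3)) := by
  rintro _ ⟨r, ⟨h0, hT, h1, h2⟩, rfl⟩
  have hα : 0 < α := by linarith
  rw [le_mul_one_add_div_iff hα] at hT
  refine vjk_add_mem_shiftedWedge hβ (by linarith) hM hℓ hk hj h0 (by nlinarith) ?_
  have hcol := mul_le_mul_of_nonneg_left hjk hM.le
  have hslope : cl * r.2 ≤ M * cl + M * β := by
    nlinarith [mul_le_mul_of_nonneg_left hT hcl,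
      mul_le_mul_of_nonneg_left hclα (mul_nonneg hM.le hβ.le)]
  nlinarith

end Pieces

section Y00

variable {α β M cl : ℝ} {ℓ d : ℤ}

theorem bigR_eq_Rjk_zero : bigR α β M = Rjk α β M 0 0 := by
  simp only [Rjk, vjk, shiftSet, Int.cast_zero, mul_zero, zero_mul, Prod.mk_zero_zero, zero_add,
    image_id']

theorem diagonal_subset_shiftedWedge {i : ℤ} (hβ : 0 < β) (h3β : 3 * β < α) (hM : 0 < M)
    (hclα : cl ≤ α - β) (hi : 0 ≤ i) (hiℓ : i ≤ ℓ) :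
    Rjk α β M i i ∪ Lsjk α β M i i ⊆ shiftedWedge (M * α) cl 0 (M * α * (ℓ + 3)) := by
  have hii : cl * i ≤ i * (α - β) := by
    rw [mul_comm]
    exact mul_le_mul_of_nonneg_left hclα (by exact_mod_cast hi)
  exact union_subset
    (Rjk_subset_shiftedWedge hβ h3β hM (by linarith) (by omega) hi (by omega) hii)
    (Lsjk_subset_shiftedWedge hβ h3β hM (by linarith) (by omega) hi (by omega) hii)

theorem branch_subset_shiftedWedge {j k : ℤ} (hβ : 0 < β) (h3β : 3 * β < α) (hM : 0 < M)
    (hcl0 : 0 ≤ cl) (hclα : cl ≤ α - β) (hcl : cl * (ℓ + d + 1) = (ℓ - d - 1) * (α - β))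
    (hℓ : 0 ≤ ℓ) (hk : 0 ≤ k) (hkℓ : k ≤ ℓ + d) (hj : ℓ - d ≤ j) (hjℓ : j ≤ ℓ + 1) :
    Ljk α β M j k ∪ Rsjk α β M j k ⊆ shiftedWedge (M * α) cl 0 (M * α * (ℓ + 3)) := by
  have hL : cl * (k + 1) ≤ (j - 1) * (α - β) :=
    calc cl * (k + 1) ≤ cl * (ℓ + d + 1) := by gcongr; exact_mod_cast hkℓ
      _ = (ℓ - d - 1) * (α - β) := hcl
      _ ≤ (j - 1) * (α - β) := by gcongr; linarith; exact_mod_cast hj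
  have hR : cl * k ≤ j * (α - β) := by nlinarith
  exact union_subset (Ljk_subset_shiftedWedge hβ h3β hM hcl0 hclα hℓ hk hjℓ hL)
    ((Rsjk_subset_Rjk hβ h3β hM).trans
      (Rjk_subset_shiftedWedge hβ h3β hM (by linarith) hℓ hk hjℓ hR))

theorem Y00_subset_shiftedWedge (hβ : 0 < β) (h3β : 3 * β < α) (hM : 0 < M) (hd0 : 0 ≤ d)
    (hd : d ≤ ℓ - 2) (hcl : cl * (ℓ + d + 1) = (ℓ - d - 1) * (α - β)) :
    Y00 α β M ℓ d ⊆ shiftedWedge (M * α) cl 0 (M * α * (ℓ + 3)) := by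
  have hℓd : (d : ℝ) + 2 ≤ ℓ := by exact_mod_cast (by omega : d + 2 ≤ ℓ)
  have hd0' : (0 : ℝ) ≤ d := by exact_mod_cast hd0
  have hcl0 : 0 ≤ cl := by nlinarith
  have hclα : cl ≤ α - β := by nlinarith
  have diag i (hi : 0 ≤ i) (hiℓ : i ≤ ℓ) :=
    union_subset_iff.1 (diagonal_subset_shiftedWedge hβ h3β hM hclα hi hiℓ)
  have branch j k (hk : 0 ≤ k) (hkℓ : k ≤ ℓ + d) (hj : ℓ - d ≤ j) (hjℓ : j ≤ ℓ + 1) :=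
    union_subset_iff.1
      (branch_subset_shiftedWedge hβ h3β hM hcl0 hclα hcl (by omega) hk hkℓ hj hjℓ)
  refine union_subset
    (union_subset (union_subset (union_subset (union_subset ?_ ?_) ?_) ?_) ?_) ?_
  · rw [bigR_eq_Rjk_zero]
    exact (diag 0 le_rfl (by omega)).1
  · refine iUnion₂_subset fun i hi => ?_
    obtain ⟨hi1, hiℓ⟩ := Finset.mem_Icc.1 hi
    exact union_subset (diag i (by omega) hiℓ).1 (diag i (by omega) hiℓ).2
  · exact (branch ℓ ℓ (by omega) (by omega) (by omega) (by omega)).1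
  · split_ifs
    · exact (branch _ _ (by omega) (by omega) (by omega) (by omega)).1
    · exact empty_subset _
  · split_ifs
    · exact union_subset (branch _ _ (by omega) (by omega) (by omega) (by omega)).1
        (branch _ _ (by omega) (by omega) (by omega) (by omega)).2
    · exact empty_subset _
  · split_ifs
    · refine union_subset (union_subset (iUnion₂_subset fun i hi => ?_) ?_) ?_
      · obtain ⟨hi0, hid⟩ := Finset.mem_Ico.1 hi
        exact union_subset (union_subset (union_subset
          (branch _ _ (by omega) (by omega) (by omega) (by omega)).1
          (branch _ _ (by omega) (by omega) (by omega) (by omega)).2)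
          (branch _ _ (by omega) (by omega) (by omega) (by omega)).1)
          (branch _ _ (by omega) (by omega) (by omega) (by omega)).2
      · exact (branch _ _ (by omega) (by omega) (by omega) (by omega)).1
      · exact (branch _ _ (by omega) (by omega) (by omega) (by omega)).2
    · exact empty_subset _

end Y00

theorem Yjk_offset_mem_wedge {α β M cl cr : ℝ} {ℓ d j k : ℤ} (hM : 0 ≤ M) (hαβ : 0 ≤ α - β)
    (hℓd : 0 ≤ ℓ + d + 1) (hcl : cl * (ℓ + d + 1) = (ℓ - d - 1) * (α - β))
    (hcr : cr * (ℓ + d + 1) = (ℓ - d + 1) * (α - β)) (hk : 0 ≤ k) (hjk : -k ≤ j) (hkj : j ≤ k) :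
    (M * ((k * (ℓ - d) + j : ℤ) : ℝ) * (α - β), M * (k : ℝ) * ((ℓ + d + 1 : ℤ) : ℝ)) ∈
      wedge cl cr 0 := by
  have hkj' : (0 : ℝ) ≤ k + j := by exact_mod_cast (by omega : 0 ≤ k + j)
  have hjk' : (0 : ℝ) ≤ k - j := by exact_mod_cast (by omega : 0 ≤ k - j)
  have hl := mul_nonneg (mul_nonneg hM hαβ) hkj'
  have hr := mul_nonneg (mul_nonneg hM hαβ) hjk'
  simp only [wedge, mem_ofPred_eq]
  push_cast
  refine ⟨mul_nonneg (mul_nonneg hM (by exact_mod_cast hk)) (by exact_mod_cast hℓd), ?_, ?_⟩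
  · linear_combination (M * k) * hcl + hl
  · linear_combination (-(M * k)) * hcr + hr

theorem Y_subset_wedge_general (α β M : ℝ) (hβ0 : 0 < β) (hβ : β < α / 3) (hM : 0 < M)
    (ℓ d : ℤ) (hd0 : 0 ≤ d) (hd : d ≤ ℓ - 2)
    (sl sr : ℝ)
    (hsl : sl = ((ℓ : ℝ) + d + 1) / (((ℓ : ℝ) - d - 1) * (α - β)))
    (hsr : sr = ((ℓ : ℝ) + d + 1) / (((ℓ : ℝ) - d + 1) * (α - β))) :
    ∀ p ∈ Yreg α β M ℓ d,
      (p.1 + M * α, p.2) ∈ wedge (1 / sl) (1 / sr) (M * α * ((ℓ : ℝ) + 3)) := by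
  have h3β : 3 * β < α := by linarith
  have hK : (0 : ℝ) < ℓ + d + 1 := by exact_mod_cast (by omega : 0 < ℓ + d + 1)
  have hcl : 1 / sl * (ℓ + d + 1) = (ℓ - d - 1) * (α - β) := by
    rw [hsl, one_div_div, div_mul_cancel₀ _ hK.ne']
  have hcr : 1 / sr * (ℓ + d + 1) = (ℓ - d + 1) * (α - β) := by
    rw [hsr, one_div_div, div_mul_cancel₀ _ hK.ne']
  have hcr0 : 0 ≤ 1 / sr := by
    have hℓd : (d : ℝ) + 2 ≤ ℓ := by exact_mod_cast (by omega : d + 2 ≤ ℓ)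
    rw [hsr, one_div_div]
    exact div_nonneg (mul_nonneg (by linarith) (by linarith)) hK.le
  have hY00 : Y00 α β M ℓ d ⊆ shiftedWedge (M * α) (1 / sl) (1 / sr) (M * α * (ℓ + 3)) :=
    fun q hq => wedge_subset_wedge le_rfl hcr0 le_rfl
      (Y00_subset_shiftedWedge hβ0 h3β hM hd0 hd hcl hq)
  intro p hp
  simp only [Yreg, mem_iUnion] at hp
  obtain ⟨j, k, ⟨hk, -, hjk, hkj⟩, hp⟩ := hp
  exact shiftSet_shiftedWedge_subset
    (Yjk_offset_mem_wedge hM.le (by linarith) (by omega) hcl hcr hk hjk hkj) (image_mono hY00 hp)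

/-- `Y(ℓ,d,M) ⊆ W(1/s_l, 1/s_r, Mα(ℓ+3)) − (Mα, 0)`. -/
theorem Y_subset_wedge (α β M : ℝ) (hα : 0 < α) (hβ0 : 0 < β) (hβ : β < α / 3) (hM : 0 < M)
    (ℓ d : ℤ) (hℓ : 2 ≤ ℓ) (hd0 : 0 ≤ d) (hd : d ≤ ℓ - 2)
    (sl sr : ℝ)
    (hsl : sl = ((ℓ : ℝ) + d + 1) / (((ℓ : ℝ) - d - 1) * (α - β)))
    (hsr : sr = ((ℓ : ℝ) + d + 1) / (((ℓ : ℝ) - d + 1) * (α - β))) :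
    ∀ p ∈ Yreg α β M ℓ d,
      (p.1 + M * α, p.2) ∈ wedge (1 / sl) (1 / sr) (M * α * ((ℓ : ℝ) + 3)) :=
  Y_subset_wedge_general α β M hβ0 hβ hM ℓ d hd0 hd sl sr hsl hsr
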